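/- arXiv:1606.01043 — 2 statements merged into one kernel-verified Lean document; each statement's English description precedes it below -/
import Mathlib

section
/- Let G be a triangle-free graph on n vertices with maximum degree at most d, and let λ > 0. Then the occupancy fraction satisfies (1/n)·ᾱ_G(λ) ≥ (λ/(1+λ)) · W(d·log(1+λ)) / (d·log(1+λ)), where W is the Lambert W function (the inverse of x ↦ x e^x on the positive reals). -/
/-! Let `I` be drawn from the hard-core model at fugacity `λ` and call a vertex free when no
neighbour of it lies in `I`. A vertex lies in `I` with probability `λ / (1 + λ)` times the
probability that it is free. Conditioned on `I \ N(v)`, triangle-freeness makes `I ∩ N(v)` a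
hard-core sample on the `Y_v` neighbours of `v` not covered by `I \ N(v)`, which are pairwise
non-adjacent; so `v` is free with probability `E[(1 + λ)^(-Y_v)]`. Double counting gives
`∑ᵥ Y_v ≤ d · #(free vertices)`, hence by Jensen the expected fraction `q` of free vertices
satisfies `q ≥ exp (-d log (1 + λ) q)`, that is `d log (1 + λ) q ≥ W (d log (1 + λ))`.
-/
open Finset MeasureTheory Real
open scoped Classical

noncomputable def indSets {V : Type*} [Fintype V] (G : SimpleGraph V) : Finset (Finset V) :=
  Finset.univ.filter (fun s => ∀ u ∈ s, ∀ v ∈ s, ¬ G.Adj u v)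

/-- The independence polynomial (hard-core partition function). -/
noncomputable def indPoly {V : Type*} [Fintype V] (G : SimpleGraph V) (x : ℝ) : ℝ :=
  ∑ s ∈ indSets G, x ^ s.card

/-- Expected size of an independent set from the hard-core model at fugacity x. -/
noncomputable def avgSize {V : Type*} [Fintype V] (G : SimpleGraph V) (x : ℝ) : ℝ :=
  x * deriv (indPoly G) x / indPoly G x

theorem Finset.sum_powerset_pow_card {α : Type*} (s : Finset α) (l : ℝ) :
    ∑ t ∈ s.powerset, l ^ t.card = (1 + l) ^ s.card := by
  simpa [add_comm] using sum_pow_mul_eq_add_pow l 1 s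

-- Jensen's inequality for `exp`, via the tangent line at `-m`.
theorem Real.exp_neg_mul_sum_le_sum_mul_exp_neg {ι : Type*} {t : Finset ι} {p x : ι → ℝ}
    {m : ℝ} (hp : ∀ i ∈ t, 0 ≤ p i) (hm : ∑ i ∈ t, p i * x i ≤ m * ∑ i ∈ t, p i) :
    exp (-m) * ∑ i ∈ t, p i ≤ ∑ i ∈ t, p i * exp (-x i) := by
  have htangent : ∀ i ∈ t, exp (-m) * (p i * (m - x i + 1)) ≤ p i * exp (-x i) :=
    fun i hi => calc
      exp (-m) * (p i * (m - x i + 1)) ≤ exp (-m) * (p i * exp (m - x i)) := by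
        gcongr
        · exact hp i hi
        · exact add_one_le_exp _
      _ = p i * exp (-x i) := by
        rw [mul_left_comm, ← exp_add]
        ring_nf
  calc exp (-m) * ∑ i ∈ t, p i
      ≤ exp (-m) * ∑ i ∈ t, p i * (m - x i + 1) := by
        refine mul_le_mul_of_nonneg_left ?_ (exp_pos _).le
        simp only [mul_add, mul_sub, mul_one, sum_add_distrib, sum_sub_distrib, ← sum_mul]
        linarith
    _ ≤ ∑ i ∈ t, p i * exp (-x i) := by
        rw [mul_sum]
        exact sum_le_sum htangent

-- With `w = W c`: `exp (-(c * q)) ≤ q` means `c q * exp (c q) ≥ w * exp w`, and `x ↦ x * exp x`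
-- is increasing.
theorem Real.div_le_of_mul_exp_eq_of_exp_neg_mul_le {w c q : ℝ} (hw : 0 < w)
    (hc : w * exp w = c) (hq : exp (-(c * q)) ≤ q) : w / c ≤ q := by
  have hc_pos : 0 < c := hc ▸ mul_pos hw (exp_pos w)
  have hone : 1 ≤ q * exp (c * q) := by
    have := mul_le_mul_of_nonneg_right hq (exp_pos (c * q)).le
    rwa [← exp_add, neg_add_cancel, exp_zero] at this
  rw [div_le_iff₀ hc_pos, mul_comm]
  by_contra! hlt
  have hmono : c * q * exp (c * q) < w * exp w :=
    mul_lt_mul hlt (exp_le_exp.2 hlt.le) (exp_pos _) hw.le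
  linarith [mul_le_mul_of_nonneg_left hone hc_pos.le]

namespace SimpleGraph

variable {V : Type*} [Fintype V] (G : SimpleGraph V)

theorem mem_indSets {s : Finset V} : s ∈ indSets G ↔ ∀ u ∈ s, ∀ v ∈ s, ¬G.Adj u v := by
  simp [indSets]

theorem not_adj_of_mem_neighborFinset (htf : G.CliqueFree 3) {v a b : V}
    (ha : a ∈ G.neighborFinset v) (hb : b ∈ G.neighborFinset v) : ¬G.Adj a b := fun hab =>
  G.isIndepSet_neighborSet_of_triangleFree htf v (by simpa using ha) (by simpa using hb)
    hab.ne hab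

theorem disjoint_neighborFinset_of_mem_indSets {s : Finset V} (hs : s ∈ indSets G) {v : V}
    (hv : v ∈ s) : Disjoint s (G.neighborFinset v) :=
  Finset.disjoint_right.2 fun u hu hus =>
    (G.mem_indSets.1 hs) v hv u hus ((G.mem_neighborFinset v u).1 hu)

theorem mem_indSets_of_subset {s t : Finset V} (hs : s ∈ indSets G) (hts : t ⊆ s) :
    t ∈ indSets G :=
  G.mem_indSets.2 fun u hu v hv => G.mem_indSets.1 hs u (hts hu) v (hts hv)

theorem indPoly_pos {x : ℝ} (hx : 0 ≤ x) : 0 < indPoly G x :=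
  calc (0 : ℝ) < x ^ (∅ : Finset V).card := by simp
    _ ≤ ∑ s ∈ indSets G, x ^ s.card :=
        single_le_sum (f := fun s => x ^ s.card) (fun s _ => by positivity)
          (G.mem_indSets.2 (by simp))

theorem mul_deriv_indPoly (x : ℝ) :
    x * deriv (indPoly G) x = ∑ v, ∑ s ∈ (indSets G).filter (v ∈ ·), x ^ s.card := by
  have hderiv : deriv (indPoly G) x = ∑ s ∈ indSets G, s.card * x ^ (s.card - 1) := by
    rw [show indPoly G = fun y => ∑ s ∈ indSets G, y ^ s.card from rfl,
      deriv_fun_sum fun s _ => differentiableAt_pow _]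
    simp
  rw [hderiv, mul_sum]
  simp_rw [sum_filter]
  rw [sum_comm]
  refine sum_congr rfl fun s _ => ?_
  rw [sum_ite_mem, univ_inter, sum_const, nsmul_eq_mul]
  rcases s.card with _ | n
  · simp
  · rw [Nat.add_sub_cancel, pow_succ]
    ring

theorem sum_filter_mem_pow_card_eq_mul (v : V) (l : ℝ) :
    ∑ s ∈ (indSets G).filter (v ∈ ·), l ^ s.card
      = l * ∑ s ∈ (indSets G).filter (fun s => Disjoint s (G.neighborFinset v) ∧ v ∉ s),
          l ^ s.card := by
  rw [mul_sum]
  refine (sum_nbij' (insert v) (fun s => s.erase v) ?_ ?_ ?_ ?_ ?_).symm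
  · simp only [mem_filter, G.mem_indSets, mem_insert]
    rintro s ⟨hs, hdisj, -⟩
    refine ⟨?_, .inl trivial⟩
    rintro a (rfl | ha) b (rfl | hb) hab
    · exact G.irrefl hab
    · exact Finset.disjoint_left.1 hdisj hb ((G.mem_neighborFinset _ _).2 hab)
    · exact Finset.disjoint_left.1 hdisj ha ((G.mem_neighborFinset _ _).2 hab.symm)
    · exact hs a ha b hb hab
  · simp only [mem_filter]
    rintro s ⟨hs, hv⟩
    exact ⟨G.mem_indSets_of_subset hs (erase_subset v s),
      (G.disjoint_neighborFinset_of_mem_indSets hs hv).mono_left (erase_subset v s),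
      notMem_erase v s⟩
  · simp only [mem_filter]
    rintro s ⟨-, -, hv⟩
    exact erase_insert hv
  · simp only [mem_filter]
    rintro s ⟨-, hv⟩
    exact insert_erase hv
  · simp only [mem_filter]
    rintro s ⟨-, -, hv⟩
    rw [card_insert_of_notMem hv, pow_succ']

theorem one_add_mul_sum_filter_mem_pow_card (v : V) (l : ℝ) :
    (1 + l) * ∑ s ∈ (indSets G).filter (v ∈ ·), l ^ s.card
      = l * ∑ s ∈ (indSets G).filter (fun s => Disjoint s (G.neighborFinset v)),
          l ^ s.card := by
  have hmem : ((indSets G).filter (fun s => Disjoint s (G.neighborFinset v))).filter (v ∈ ·)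
      = (indSets G).filter (v ∈ ·) := by
    rw [filter_filter]
    exact filter_congr fun s hs =>
      and_iff_right_of_imp (G.disjoint_neighborFinset_of_mem_indSets hs)
  rw [← sum_filter_add_sum_filter_not
      ((indSets G).filter (fun s => Disjoint s (G.neighborFinset v))) (v ∈ ·),
    hmem, filter_filter, mul_add, ← sum_filter_mem_pow_card_eq_mul]
  ring

noncomputable def uncoveredNeighbors (v : V) (s : Finset V) : Finset V :=
  (G.neighborFinset v).filter (fun u => Disjoint s (G.neighborFinset u))

theorem uncoveredNeighbors_subset (v : V) (s : Finset V) :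
    G.uncoveredNeighbors v s ⊆ G.neighborFinset v :=
  filter_subset _ _

theorem uncoveredNeighbors_union (htf : G.CliqueFree 3) {v : V} (s : Finset V) {t : Finset V}
    (ht : t ⊆ G.neighborFinset v) :
    G.uncoveredNeighbors v (s ∪ t) = G.uncoveredNeighbors v s := by
  refine filter_congr fun u hu => ?_
  rw [disjoint_union_left, and_iff_left_iff_imp]
  exact fun _ => Finset.disjoint_left.2 fun a ha hau =>
    G.not_adj_of_mem_neighborFinset htf hu (ht ha) ((G.mem_neighborFinset u a).1 hau)

-- `s ↦ (s \ N(v), s ∩ N(v))`; triangle-freeness lets every set of uncovered neighbours of `v`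
-- be added to an independent set avoiding `N(v)`.
theorem sum_indSets_eq_sum_sum_powerset (htf : G.CliqueFree 3) (v : V) (F : Finset V → ℝ) :
    ∑ s ∈ indSets G, F s
      = ∑ k ∈ (indSets G).filter (fun k => Disjoint k (G.neighborFinset v)),
          ∑ t ∈ (G.uncoveredNeighbors v k).powerset, F (k ∪ t) := by
  rw [sum_sigma']
  refine sum_nbij' (fun s => ⟨s \ G.neighborFinset v, s ∩ G.neighborFinset v⟩)
    (fun p => p.1 ∪ p.2) ?_ ?_ ?_ ?_ ?_
  · intro s hs
    simp only [mem_sigma, mem_filter, mem_powerset]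
    refine ⟨⟨G.mem_indSets_of_subset hs sdiff_subset, sdiff_disjoint⟩, ?_⟩
    intro u hu
    rw [mem_inter] at hu
    exact mem_filter.2 ⟨hu.2, (G.disjoint_neighborFinset_of_mem_indSets hs hu.1).mono_left
      sdiff_subset⟩
  · rintro ⟨k, t⟩
    simp only [mem_sigma, mem_filter, mem_powerset]
    rintro ⟨⟨hk, -⟩, ht⟩
    have hkt : ∀ a ∈ k, ∀ b ∈ t, ¬G.Adj a b := fun a ha b hb hab =>
      Finset.disjoint_left.1 (mem_filter.1 (ht hb)).2 ha
        ((G.mem_neighborFinset b a).2 hab.symm)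
    rw [G.mem_indSets]
    rintro a ha b hb
    rcases mem_union.1 ha with ha | ha <;> rcases mem_union.1 hb with hb | hb
    · exact G.mem_indSets.1 hk a ha b hb
    · exact hkt a ha b hb
    · exact fun hab => hkt b hb a ha hab.symm
    · have htN := ht.trans (G.uncoveredNeighbors_subset v k)
      exact G.not_adj_of_mem_neighborFinset htf (htN ha) (htN hb)
  · intro s _
    exact sdiff_union_inter s _
  · rintro ⟨k, t⟩
    simp only [mem_sigma, mem_filter, mem_powerset]
    rintro ⟨⟨-, hk⟩, ht⟩
    have htN := ht.trans (G.uncoveredNeighbors_subset v k)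
    rw [union_sdiff_distrib, union_inter_distrib_right, hk.sdiff_eq_left,
      sdiff_eq_empty_iff_subset.2 htN, disjoint_iff_inter_eq_empty.1 hk, inter_eq_left.2 htN,
      union_empty, empty_union]
  · intro s _
    rw [sdiff_union_inter]

theorem sum_filter_disjoint_pow_card_eq (htf : G.CliqueFree 3) (v : V) {l : ℝ} (hl : 0 ≤ l) :
    ∑ s ∈ (indSets G).filter (fun s => Disjoint s (G.neighborFinset v)), l ^ s.card
      = ∑ s ∈ indSets G, l ^ s.card * ((1 + l) ^ (G.uncoveredNeighbors v s).card)⁻¹ := by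
  rw [sum_filter, G.sum_indSets_eq_sum_sum_powerset htf v,
    G.sum_indSets_eq_sum_sum_powerset htf v]
  refine sum_congr rfl fun k hk => ?_
  have hkN := (mem_filter.1 hk).2
  have htN : ∀ t ∈ (G.uncoveredNeighbors v k).powerset, t ⊆ G.neighborFinset v :=
    fun t ht => (mem_powerset.1 ht).trans (G.uncoveredNeighbors_subset v k)
  have hcard : ∀ t ∈ (G.uncoveredNeighbors v k).powerset, (k ∪ t).card = k.card + t.card :=
    fun t ht => card_union_of_disjoint (hkN.mono_right (htN t ht))
  calc ∑ t ∈ (G.uncoveredNeighbors v k).powerset,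
          (if Disjoint (k ∪ t) (G.neighborFinset v) then l ^ (k ∪ t).card else 0)
      = l ^ k.card := by
        rw [sum_eq_single_of_mem ∅ (empty_mem_powerset _)]
        · simp [hkN]
        · intro t ht hne
          rw [if_neg fun h => hne ((disjoint_union_left.1 h).2.eq_bot_of_le (htN t ht))]
    _ = ∑ t ∈ (G.uncoveredNeighbors v k).powerset,
          l ^ k.card * ((1 + l) ^ (G.uncoveredNeighbors v k).card)⁻¹ * l ^ t.card := by
        have : (1 + l) ^ (G.uncoveredNeighbors v k).card ≠ 0 := by positivity
        rw [← mul_sum, sum_powerset_pow_card, mul_assoc, inv_mul_cancel₀ this, mul_one]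
    _ = _ := by
        refine sum_congr rfl fun t ht => ?_
        rw [G.uncoveredNeighbors_union htf k (htN t ht), hcard t ht, pow_add]
        ring

theorem sum_card_uncoveredNeighbors_le {d : ℕ} (hdeg : ∀ v, G.degree v ≤ d) (s : Finset V) :
    ∑ v, (G.uncoveredNeighbors v s).card
      ≤ d * (univ.filter (fun u => Disjoint s (G.neighborFinset u))).card := by
  set free := univ.filter (fun u => Disjoint s (G.neighborFinset u))
  have hdc := sum_card_bipartiteAbove_eq_sum_card_bipartiteBelow
    (s := univ) (t := free) G.Adj
  have hAbove : ∀ v, free.bipartiteAbove G.Adj v = G.uncoveredNeighbors v s := fun v => by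
    ext u
    simp [free, uncoveredNeighbors, and_comm]
  have hBelow : ∀ u, (univ.bipartiteBelow G.Adj u).card = G.degree u := fun u => by
    rw [← G.card_neighborFinset_eq_degree]
    congr 1
    ext w
    simp [adj_comm]
  simp only [hAbove, hBelow] at hdc
  rw [hdc, mul_comm]
  exact sum_le_card_nsmul _ _ _ fun u _ => hdeg u

theorem sum_sum_pow_card_mul_card_uncoveredNeighbors_le {d : ℕ} (hdeg : ∀ v, G.degree v ≤ d)
    {l : ℝ} (hl : 0 ≤ l) :
    ∑ v, ∑ s ∈ indSets G, l ^ s.card * ((G.uncoveredNeighbors v s).card : ℝ)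
      ≤ d * ∑ v, ∑ s ∈ (indSets G).filter (fun s => Disjoint s (G.neighborFinset v)),
          l ^ s.card := by
  simp_rw [sum_filter]
  rw [sum_comm, sum_comm (s := univ), mul_sum]
  refine sum_le_sum fun s _ => ?_
  have hcount : (∑ v, (G.uncoveredNeighbors v s).card : ℝ)
      ≤ d * (univ.filter (fun u => Disjoint s (G.neighborFinset u))).card :=
    mod_cast G.sum_card_uncoveredNeighbors_le hdeg s
  rw [← mul_sum, ← sum_filter, sum_const, nsmul_eq_mul]
  calc l ^ s.card * ∑ v, ((G.uncoveredNeighbors v s).card : ℝ)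
      ≤ l ^ s.card * (d * (univ.filter (fun u => Disjoint s (G.neighborFinset u))).card) :=
        mul_le_mul_of_nonneg_left hcount (by positivity)
    _ = _ := by ring

-- The probability that a uniformly random vertex has no neighbour in the hard-core random set.
noncomputable def freeFraction (l : ℝ) : ℝ :=
  (∑ v, ∑ s ∈ (indSets G).filter (fun s => Disjoint s (G.neighborFinset v)), l ^ s.card)
    / (Fintype.card V * indPoly G l)

theorem avgSize_div_card_eq {l : ℝ} (hl : 0 ≤ l) :
    avgSize G l / Fintype.card V = l / (1 + l) * G.freeFraction l := by
  have hfree : (1 + l) * ∑ v, ∑ s ∈ (indSets G).filter (v ∈ ·), l ^ s.card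
      = l * ∑ v, ∑ s ∈ (indSets G).filter (fun s => Disjoint s (G.neighborFinset v)),
          l ^ s.card := by
    rw [mul_sum, mul_sum]
    exact sum_congr rfl fun v _ => G.one_add_mul_sum_filter_mem_pow_card v l
  calc avgSize G l / Fintype.card V
      = (∑ v, ∑ s ∈ (indSets G).filter (v ∈ ·), l ^ s.card)
          / (Fintype.card V * indPoly G l) := by
        rw [avgSize, mul_deriv_indPoly, div_div, mul_comm (indPoly G l)]
    _ = _ := by
        rw [← mul_div_mul_left _ _ (by positivity : (1 + l) ≠ 0), hfree, mul_div_mul_comm,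
          freeFraction]

theorem exp_neg_mul_freeFraction_le [Nonempty V] (htf : G.CliqueFree 3) {d : ℕ}
    (hdeg : ∀ v, G.degree v ≤ d) {l : ℝ} (hl : 0 ≤ l) :
    exp (-(d * log (1 + l) * G.freeFraction l)) ≤ G.freeFraction l := by
  set c := log (1 + l)
  set Q :=
    ∑ v, ∑ s ∈ (indSets G).filter (fun s => Disjoint s (G.neighborFinset v)), l ^ s.card
  set P := Fintype.card V * indPoly G l
  have hq : G.freeFraction l = Q / P := rfl
  have hP : 0 < P := mul_pos (by exact_mod_cast Fintype.card_pos (α := V)) (G.indPoly_pos hl)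
  have hc : 0 ≤ c := log_nonneg (by linarith)
  have hexp : exp c = 1 + l := exp_log (by linarith)
  have hmass : ∑ p ∈ (univ : Finset V) ×ˢ indSets G, l ^ p.2.card = P := by
    rw [sum_product]
    simp only [sum_const, card_univ, nsmul_eq_mul]
    rfl
  have hfree : ∑ p ∈ (univ : Finset V) ×ˢ indSets G,
      l ^ p.2.card * exp (-((G.uncoveredNeighbors p.1 p.2).card * c)) = Q := by
    rw [sum_product]
    refine sum_congr rfl fun v _ => ?_
    simp_rw [exp_neg, exp_nat_mul, hexp]
    exact (G.sum_filter_disjoint_pow_card_eq htf v hl).symm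
  have hmean : ∑ p ∈ (univ : Finset V) ×ˢ indSets G,
      l ^ p.2.card * ((G.uncoveredNeighbors p.1 p.2).card * c)
        ≤ d * c * (Q / P) * ∑ p ∈ (univ : Finset V) ×ˢ indSets G, l ^ p.2.card := by
    rw [hmass, sum_product]
    simp_rw [← mul_assoc, ← sum_mul]
    rw [mul_assoc, div_mul_cancel₀ _ hP.ne', mul_right_comm]
    exact mul_le_mul_of_nonneg_right
      (G.sum_sum_pow_card_mul_card_uncoveredNeighbors_le hdeg hl) hc
  have h := exp_neg_mul_sum_le_sum_mul_exp_neg (fun p _ => by positivity) hmean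
  rw [hmass, hfree] at h
  rw [hq, le_div_iff₀ hP]
  exact h

end SimpleGraph

theorem stmt4_general {V : Type*} [Fintype V] [Nonempty V] (G : SimpleGraph V) (d : ℕ)
    (htf : G.CliqueFree 3) (hdeg : ∀ v, G.degree v ≤ d)
    (l w : ℝ) (hl : 0 < l) (hw : 0 < w)
    (hWe : w * Real.exp w = d * Real.log (1 + l)) :
    (l / (1 + l)) * (w / (d * Real.log (1 + l)))
      ≤ avgSize G l / (Fintype.card V : ℝ) := by
  rw [G.avgSize_div_card_eq hl.le]
  gcongr
  exact Real.div_le_of_mul_exp_eq_of_exp_neg_mul_le hw hWe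
    (G.exp_neg_mul_freeFraction_le htf hdeg hl.le)

theorem stmt4 {V : Type*} [Fintype V] [Nonempty V] (G : SimpleGraph V) (d : ℕ)
    (hd1 : 1 ≤ d) (htf : G.CliqueFree 3) (hdeg : ∀ v, G.degree v ≤ d)
    (l w : ℝ) (hl : 0 < l) (hw : 0 < w)
    (hWe : w * Real.exp w = d * Real.log (1 + l)) :
    (l / (1 + l)) * (w / (d * Real.log (1 + l)))
      ≤ avgSize G l / (Fintype.card V : ℝ) :=
  stmt4_general G d htf hdeg l w hl hw hWe
end

section
/- Let G be a triangle-free graph on n vertices with maximum degree at most d. Then for all λ > 0, P_G(λ) ≥ exp( (n/(2d)) · [ W(d·log(1+λ))² + 2·W(d·log(1+λ)) ] ), where P_G is the independence polynomial and W is the Lambert W function. -/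
open Finset MeasureTheory Real
open scoped Classical

/-!
Fix a vertex `v` and condition the hard-core model at fugacity `t` on `J = I \ N[v]`. Given `J`,
either `I = J ∪ {v}` or `I = J ∪ S` for an arbitrary subset `S` of the `k` neighbours of `v` that
have no neighbour in `J` (triangle-freeness makes every such `S` independent). With
`x = (1 + t)^k`, the inequality `(1 + s) x ≤ e^s + x log x` yields, for every `J` and every `s`,
`(1 + s) e^{-s} t / (1 + t) ≤ Pr[v ∈ I | J] + e^{-s} log (1 + t) E[|I ∩ N(v)| | J]`.
Summing over `v` and using `deg ≤ d` gives the occupancy bound `ᾱ(t) ≥ n t e^{-s} / (1 + t)` for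
`s e^s = d log (1 + t)`, i.e. `s = W(d log (1 + t))`. Along the reparametrisation
`t = exp (s e^s / d) - 1` the derivative of `log P` is then at least `(n / d) (1 + s)`, and
integrating from `0` to `w` gives the claim.
-/

lemma one_add_mul_le_exp_add_mul_log (s : ℝ) {x : ℝ} (hx : 0 < x) :
    (1 + s) * x ≤ exp s + x * log x := by
  have h := log_le_sub_one_of_pos (div_pos (exp_pos s) hx)
  rw [log_div (exp_ne_zero s) hx.ne', log_exp, le_sub_iff_add_le, le_div_iff₀ hx] at h
  linarith

lemma Finset.sum_powerset_pow_card_s13 {R α : Type*} [CommSemiring R] (t : R) (F : Finset α) :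
    ∑ S ∈ F.powerset, t ^ #S = (1 + t) ^ #F := by
  simpa using (Finset.prod_one_add (f := fun _ => t) F).symm

lemma Finset.sum_powerset_card_mul_pow_card {R α : Type*} [CommRing R] [DecidableEq α] (t : R)
    (F : Finset α) :
    (∑ S ∈ F.powerset, (#S : R) * t ^ #S) * (1 + t) = #F * t * (1 + t) ^ #F := by
  induction F using Finset.induction_on with
  | empty => simp
  | @insert a F ha ih =>
    have hinsert : ∑ S ∈ F.powerset, (#(insert a S) : R) * t ^ #(insert a S)
        = t * ∑ S ∈ F.powerset, (#S : R) * t ^ #S + t * (1 + t) ^ #F := by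
      rw [← sum_powerset_pow_card_s13, mul_sum, mul_sum, ← sum_add_distrib]
      refine sum_congr rfl fun S hS => ?_
      rw [card_insert_of_notMem fun h => ha (mem_powerset.mp hS h)]
      push_cast
      ring
    rw [sum_powerset_insert ha, hinsert, card_insert_of_notMem ha]
    push_cast
    linear_combination (1 + t) * ih

lemma mul_add_sum_powerset_le {α : Type*} [DecidableEq α] {t : ℝ} (ht : 0 < t) (s : ℝ)
    (F : Finset α) :
    (1 + s) * exp (-s) * t / (1 + t) * (t + ∑ S ∈ F.powerset, t ^ #S)
      ≤ t + exp (-s) * log (1 + t) * ∑ S ∈ F.powerset, (#S : ℝ) * t ^ #S := by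
  have h1t : 0 < 1 + t := by linarith
  set x := (1 + t) ^ #F
  have hlog : log x = #F * log (1 + t) := log_pow _ _
  have hx := one_add_mul_le_exp_add_mul_log s (pow_pos h1t #F)
  have ht' : (1 + s) * t ≤ t * exp s := by nlinarith [add_one_le_exp s]
  have hexp : exp (-s) * exp s = 1 := by rw [← exp_add, neg_add_cancel, exp_zero]
  rw [Finset.sum_powerset_pow_card_s13, div_mul_eq_mul_div, div_le_iff₀ h1t]
  calc (1 + s) * exp (-s) * t * (t + x)
      = t * exp (-s) * ((1 + s) * t + (1 + s) * x) := by ring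
    _ ≤ t * exp (-s) * (t * exp s + (exp s + x * log x)) := by gcongr
    _ = t * (1 + t) * (exp (-s) * exp s) + exp (-s) * log (1 + t) * (#F * t * x) := by
        rw [hlog]; ring
    _ = _ := by rw [hexp, ← Finset.sum_powerset_card_mul_pow_card]; ring

noncomputable section IndependentSets

variable {V : Type*} [Fintype V] (G : SimpleGraph V)

def closedNeighborFinset (v : V) : Finset V := insert v (G.neighborFinset v)

def freeNeighbors (v : V) (J : Finset V) : Finset V :=
  {u ∈ G.neighborFinset v | ∀ j ∈ J, ¬ G.Adj u j}

def indSetsAvoiding (v : V) : Finset (Finset V) :=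
  {J ∈ indSets G | Disjoint J (closedNeighborFinset G v)}

variable {G}

lemma mem_indSets {I : Finset V} : I ∈ indSets G ↔ ∀ u ∈ I, ∀ v ∈ I, ¬ G.Adj u v := by
  simp [indSets]

lemma empty_mem_indSets : ∅ ∈ indSets G := by simp [mem_indSets]

lemma mem_closedNeighborFinset {v u : V} :
    u ∈ closedNeighborFinset G v ↔ u = v ∨ G.Adj v u := by
  simp [closedNeighborFinset]

lemma mem_freeNeighbors {v u : V} {J : Finset V} :
    u ∈ freeNeighbors G v J ↔ G.Adj v u ∧ ∀ j ∈ J, ¬ G.Adj u j := by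
  simp [freeNeighbors]

lemma mem_indSetsAvoiding {v : V} {J : Finset V} :
    J ∈ indSetsAvoiding G v ↔
      J ∈ indSets G ∧ v ∉ J ∧ ∀ u ∈ J, ¬ G.Adj v u := by
  simp only [indSetsAvoiding, mem_filter, disjoint_right, mem_closedNeighborFinset]
  grind

lemma sdiff_closedNeighborFinset_mem_indSetsAvoiding {v : V} {I : Finset V}
    (hI : I ∈ indSets G) : I \ closedNeighborFinset G v ∈ indSetsAvoiding G v :=
  mem_filter.2 ⟨mem_indSets.2 fun u hu w hw =>
    mem_indSets.1 hI u (mem_sdiff.1 hu).1 w (mem_sdiff.1 hw).1, sdiff_disjoint⟩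

lemma union_mem_indSets (htf : G.CliqueFree 3) {v : V} {J S : Finset V}
    (hJ : J ∈ indSetsAvoiding G v) (hS : S ⊆ freeNeighbors G v J) : S ∪ J ∈ indSets G := by
  have hJind := mem_indSets.1 (mem_indSetsAvoiding.1 hJ).1
  have hfree : ∀ a ∈ S, G.Adj v a ∧ ∀ j ∈ J, ¬ G.Adj a j := fun a ha =>
    mem_freeNeighbors.1 (hS ha)
  simp only [mem_indSets, mem_union]
  rintro a (ha | ha) b (hb | hb) hab
  · exact htf {v, a, b} (SimpleGraph.is3Clique_triple_iff.2 ⟨(hfree a ha).1, (hfree b hb).1, hab⟩)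
  · exact (hfree a ha).2 b hb hab
  · exact (hfree b hb).2 a ha hab.symm
  · exact hJind a ha b hb hab

lemma insert_mem_indSets {v : V} {J : Finset V} (hJ : J ∈ indSetsAvoiding G v) :
    insert v J ∈ indSets G := by
  obtain ⟨hJind, -, hvJ⟩ := mem_indSetsAvoiding.1 hJ
  simp only [mem_indSets, mem_insert]
  rintro a (rfl | ha) b (rfl | hb) hab
  · exact G.irrefl hab
  · exact hvJ b hb hab
  · exact hvJ a ha hab.symm
  · exact mem_indSets.1 hJind a ha b hb hab

lemma notMem_union_freeNeighbors {v : V} {J S : Finset V} (hJ : J ∈ indSetsAvoiding G v)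
    (hS : S ⊆ freeNeighbors G v J) : v ∉ S ∪ J := by
  rw [mem_union, not_or]
  exact ⟨fun hv => G.irrefl (mem_freeNeighbors.1 (hS hv)).1, (mem_indSetsAvoiding.1 hJ).2.1⟩

lemma disjoint_freeNeighbors {v : V} {J S : Finset V} (hJ : J ∈ indSetsAvoiding G v)
    (hS : S ⊆ freeNeighbors G v J) : Disjoint S J :=
  disjoint_left.2 fun _ hu huJ =>
    (mem_indSetsAvoiding.1 hJ).2.2 _ huJ (mem_freeNeighbors.1 (hS hu)).1

lemma insert_inter_neighborFinset {v : V} {J : Finset V} (hJ : J ∈ indSetsAvoiding G v) :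
    insert v J ∩ G.neighborFinset v = ∅ := by
  obtain ⟨-, -, hJv⟩ := mem_indSetsAvoiding.1 hJ
  ext u
  simp only [mem_inter, mem_insert, SimpleGraph.mem_neighborFinset, notMem_empty, iff_false]
  rintro ⟨rfl | hu, hvu⟩
  exacts [G.irrefl hvu, hJv u hu hvu]

lemma union_inter_neighborFinset {v : V} {J S : Finset V} (hJ : J ∈ indSetsAvoiding G v)
    (hS : S ⊆ freeNeighbors G v J) : (S ∪ J) ∩ G.neighborFinset v = S := by
  obtain ⟨-, -, hJv⟩ := mem_indSetsAvoiding.1 hJ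
  ext u
  have hSv : u ∈ S → G.Adj v u := fun hu => (mem_freeNeighbors.1 (hS hu)).1
  have hJv' := hJv u
  simp only [mem_inter, mem_union, SimpleGraph.mem_neighborFinset]
  grind

lemma filter_sdiff_closedNeighborFinset_eq (htf : G.CliqueFree 3) {v : V} {J : Finset V}
    (hJ : J ∈ indSetsAvoiding G v) :
    {I ∈ indSets G | I \ closedNeighborFinset G v = J} =
      insert (insert v J) ((freeNeighbors G v J).powerset.image (· ∪ J)) := by
  obtain ⟨-, hvJ, hJv⟩ := mem_indSetsAvoiding.1 hJ
  ext I
  simp only [mem_filter, mem_insert, mem_image, mem_powerset]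
  constructor
  · rintro ⟨hI, rfl⟩
    have hIv := mem_indSets.1 hI v
    by_cases hv : v ∈ I
    · left
      ext u
      simp only [mem_insert, mem_sdiff, mem_closedNeighborFinset]
      grind
    · right
      refine ⟨I ∩ G.neighborFinset v, fun u hu => ?_, ?_⟩
      · simp only [mem_inter, SimpleGraph.mem_neighborFinset] at hu
        exact mem_freeNeighbors.2 ⟨hu.2, fun j hj => mem_indSets.1 hI u hu.1 j (mem_sdiff.1 hj).1⟩
      · ext u
        simp only [mem_union, mem_inter, mem_sdiff, mem_closedNeighborFinset,
          SimpleGraph.mem_neighborFinset]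
        grind
  · rintro (rfl | ⟨S, hS, rfl⟩)
    · refine ⟨insert_mem_indSets hJ, ?_⟩
      ext u
      simp only [mem_insert, mem_sdiff, mem_closedNeighborFinset]
      grind
    · refine ⟨union_mem_indSets htf hJ hS, ?_⟩
      ext u
      have hSv : u ∈ S → G.Adj v u := fun hu => (mem_freeNeighbors.1 (hS hu)).1
      simp only [mem_union, mem_sdiff, mem_closedNeighborFinset]
      grind

lemma sum_indSets_eq_sum_indSetsAvoiding (htf : G.CliqueFree 3) (v : V) (f : Finset V → ℝ) :
    ∑ I ∈ indSets G, f I = ∑ J ∈ indSetsAvoiding G v,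
      (f (insert v J) + ∑ S ∈ (freeNeighbors G v J).powerset, f (S ∪ J)) := by
  rw [← sum_fiberwise_of_maps_to fun I hI =>
    sdiff_closedNeighborFinset_mem_indSetsAvoiding (v := v) hI]
  refine sum_congr rfl fun J hJ => ?_
  rw [filter_sdiff_closedNeighborFinset_eq htf hJ, sum_insert, sum_image]
  · intro S hS S' hS' (h : S ∪ J = S' ∪ J)
    rw [← union_sdiff_cancel_right (disjoint_freeNeighbors hJ (mem_powerset.1 hS)),
      ← union_sdiff_cancel_right (disjoint_freeNeighbors hJ (mem_powerset.1 hS')), h]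
  · simp only [mem_image, mem_powerset, not_exists, not_and]
    exact fun S hS h => notMem_union_freeNeighbors hJ hS (h ▸ mem_insert_self v J)

end IndependentSets

section IndependencePolynomial

variable {V : Type*} [Fintype V] (G : SimpleGraph V)

lemma indPoly_zero : indPoly G 0 = 1 := by
  rw [indPoly, sum_eq_single_of_mem ∅ empty_mem_indSets]
  · simp
  · exact fun I _ hI => zero_pow (card_ne_zero.2 (nonempty_iff_ne_empty.2 hI))

lemma indPoly_pos {x : ℝ} (hx : 0 ≤ x) : 0 < indPoly G x := by
  calc (0 : ℝ) < x ^ #(∅ : Finset V) := by simp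
    _ ≤ indPoly G x :=
      single_le_sum (fun I _ => pow_nonneg hx #I) empty_mem_indSets

lemma hasDerivAt_indPoly (x : ℝ) :
    HasDerivAt (indPoly G) (∑ I ∈ indSets G, (#I : ℝ) * x ^ (#I - 1)) x :=
  HasDerivAt.fun_sum fun I _ => hasDerivAt_pow #I x

lemma mul_deriv_indPoly (x : ℝ) :
    x * deriv (indPoly G) x = ∑ I ∈ indSets G, (#I : ℝ) * x ^ #I := by
  rw [(hasDerivAt_indPoly G x).deriv, mul_sum]
  refine sum_congr rfl fun I _ => ?_
  rcases Nat.eq_zero_or_pos #I with hI | hI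
  · simp [hI]
  · rw [← Nat.sub_add_cancel hI, pow_succ]
    push_cast
    ring

lemma hasDerivAt_log_indPoly {x : ℝ} (hx : 0 < x) :
    HasDerivAt (fun y => log (indPoly G y)) (avgSize G x / x) x := by
  convert ((hasDerivAt_indPoly G x).log (indPoly_pos G hx.le).ne') using 1
  rw [avgSize, (hasDerivAt_indPoly G x).deriv]
  field_simp

end IndependencePolynomial

section Occupancy

variable {V : Type*} [Fintype V] {G : SimpleGraph V}

lemma mul_indPoly_le_sum_local_weight (htf : G.CliqueFree 3) {t : ℝ} (ht : 0 < t) (s : ℝ)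
    (v : V) :
    (1 + s) * exp (-s) * t / (1 + t) * indPoly G t ≤
      ∑ I ∈ indSets G, t ^ #I *
        ((if v ∈ I then 1 else 0) + exp (-s) * log (1 + t) * #(I ∩ G.neighborFinset v)) := by
  set c := exp (-s) * log (1 + t)
  rw [indPoly, sum_indSets_eq_sum_indSetsAvoiding htf v,
    sum_indSets_eq_sum_indSetsAvoiding htf v, mul_sum]
  refine sum_le_sum fun J hJ => ?_
  have hmass : ∑ S ∈ (freeNeighbors G v J).powerset, t ^ #(S ∪ J)
      = t ^ #J * ∑ S ∈ (freeNeighbors G v J).powerset, t ^ #S := by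
    rw [mul_sum]
    refine sum_congr rfl fun S hS => ?_
    rw [card_union_of_disjoint (disjoint_freeNeighbors hJ (mem_powerset.1 hS)), pow_add, mul_comm]
  have hcount : ∑ S ∈ (freeNeighbors G v J).powerset, t ^ #(S ∪ J) *
        ((if v ∈ S ∪ J then 1 else 0) + c * #((S ∪ J) ∩ G.neighborFinset v))
      = t ^ #J * (c * ∑ S ∈ (freeNeighbors G v J).powerset, (#S : ℝ) * t ^ #S) := by
    rw [mul_sum, mul_sum]
    refine sum_congr rfl fun S hS => ?_
    have hSJ := mem_powerset.1 hS
    rw [if_neg (notMem_union_freeNeighbors hJ hSJ), union_inter_neighborFinset hJ hSJ,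
      card_union_of_disjoint (disjoint_freeNeighbors hJ hSJ), pow_add]
    ring
  rw [hmass, hcount, if_pos (mem_insert_self v J), insert_inter_neighborFinset hJ,
    card_empty, card_insert_of_notMem (mem_indSetsAvoiding.1 hJ).2.1]
  have hlocal := mul_le_mul_of_nonneg_left (mul_add_sum_powerset_le ht s (freeNeighbors G v J))
    (pow_nonneg ht.le #J)
  push_cast
  linear_combination hlocal

lemma sum_card_inter_neighborFinset (I : Finset V) :
    ∑ v, #(I ∩ G.neighborFinset v) = ∑ u ∈ I, G.degree u := by
  simp_rw [← filter_mem_eq_inter, card_filter]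
  rw [sum_comm]
  refine sum_congr rfl fun u _ => ?_
  rw [← card_filter, ← G.card_neighborFinset_eq_degree]
  congr 1
  ext w
  simp [SimpleGraph.adj_comm]

lemma sum_local_weight_le {d : ℕ} (hdeg : ∀ v, G.degree v ≤ d) {c : ℝ} (hc : 0 ≤ c)
    (I : Finset V) :
    ∑ v, ((if v ∈ I then 1 else 0) + c * #(I ∩ G.neighborFinset v)) ≤ (1 + c * d) * #I := by
  have hdegsum : ∑ v, (#(I ∩ G.neighborFinset v) : ℝ) ≤ d * #I := by
    have h := sum_le_card_nsmul I _ d fun u _ => hdeg u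
    rw [smul_eq_mul, ← sum_card_inter_neighborFinset, mul_comm] at h
    exact_mod_cast h
  rw [sum_add_distrib, sum_ite_mem, univ_inter, sum_const, nsmul_one, ← mul_sum]
  nlinarith

theorem mul_exp_neg_div_le_avgSize (htf : G.CliqueFree 3) {d : ℕ} (hdeg : ∀ v, G.degree v ≤ d)
    {t s : ℝ} (ht : 0 < t) (hse : s * exp s = d * log (1 + t)) :
    Fintype.card V * t * exp (-s) / (1 + t) ≤ avgSize G t := by
  have hlog : 0 ≤ log (1 + t) := log_nonneg (by linarith)
  have hs : 0 ≤ s := nonneg_of_mul_nonneg_left (hse ▸ by positivity) (exp_pos s)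
  set c := exp (-s) * log (1 + t)
  have hcd : c * d = s := by
    have hexp : exp (-s) * exp s = 1 := by rw [← exp_add, neg_add_cancel, exp_zero]
    linear_combination (-exp (-s)) * hse + s * hexp
  set M := (1 + s) * exp (-s) * t / (1 + t)
  have hsum : Fintype.card V * (M * indPoly G t) ≤ (1 + s) * ∑ I ∈ indSets G, (#I : ℝ) * t ^ #I :=
    calc Fintype.card V * (M * indPoly G t) = ∑ _v : V, M * indPoly G t := by
          rw [sum_const, card_univ, nsmul_eq_mul]
      _ ≤ ∑ v, ∑ I ∈ indSets G, t ^ #I *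
            ((if v ∈ I then 1 else 0) + c * #(I ∩ G.neighborFinset v)) :=
          sum_le_sum fun v _ => mul_indPoly_le_sum_local_weight htf ht s v
      _ = ∑ I ∈ indSets G, t ^ #I *
            ∑ v, ((if v ∈ I then 1 else 0) + c * #(I ∩ G.neighborFinset v)) := by
          rw [sum_comm]
          simp_rw [mul_sum]
      _ ≤ ∑ I ∈ indSets G, t ^ #I * ((1 + c * d) * #I) :=
          sum_le_sum fun I _ => mul_le_mul_of_nonneg_left
            (sum_local_weight_le hdeg (by positivity) I) (pow_nonneg ht.le _)
      _ = (1 + s) * ∑ I ∈ indSets G, (#I : ℝ) * t ^ #I := by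
          rw [hcd, mul_sum]
          exact sum_congr rfl fun I _ => by ring
  rw [avgSize, mul_deriv_indPoly, le_div_iff₀ (indPoly_pos G ht.le)]
  refine le_of_mul_le_mul_left ?_ (by linarith : (0 : ℝ) < 1 + s)
  calc (1 + s) * (Fintype.card V * t * exp (-s) / (1 + t) * indPoly G t)
      = Fintype.card V * (M * indPoly G t) := by ring
    _ ≤ _ := hsum

end Occupancy

/-- The inverse of `t ↦ W(d log (1 + t))`. -/
noncomputable def fugacity (d : ℕ) (s : ℝ) : ℝ := exp (s * exp s / d) - 1

lemma fugacity_zero (d : ℕ) : fugacity d 0 = 0 := by simp [fugacity]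

lemma fugacity_nonneg (d : ℕ) {s : ℝ} (hs : 0 ≤ s) : 0 ≤ fugacity d s := by
  rw [fugacity, sub_nonneg]
  exact one_le_exp (by positivity)

lemma fugacity_pos {d : ℕ} (hd : 0 < d) {s : ℝ} (hs : 0 < s) : 0 < fugacity d s := by
  rw [fugacity, sub_pos]
  exact one_lt_exp_iff.2 (by positivity)

lemma mul_exp_eq_mul_log_one_add_fugacity {d : ℕ} (hd : 0 < d) (s : ℝ) :
    s * exp s = d * log (1 + fugacity d s) := by
  rw [fugacity, add_sub_cancel, log_exp]
  field_simp

lemma hasDerivAt_fugacity (d : ℕ) (s : ℝ) :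
    HasDerivAt (fugacity d) ((1 + fugacity d s) * ((1 + s) * exp s / d)) s :=
  ((((hasDerivAt_id' s).fun_mul (hasDerivAt_exp s)).div_const (d : ℝ)).exp.sub_const 1).congr_deriv
    (by rw [fugacity]; ring)

section Integration

variable {V : Type*} [Fintype V] {G : SimpleGraph V}

lemma card_div_mul_le_deriv_log_indPoly_fugacity (htf : G.CliqueFree 3) {d : ℕ} (hd : 0 < d)
    (hdeg : ∀ v, G.degree v ≤ d) {s : ℝ} (hs : 0 < s) :
    Fintype.card V / d * (1 + s) ≤
      avgSize G (fugacity d s) / fugacity d s * ((1 + fugacity d s) * ((1 + s) * exp s / d)) := by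
  have ht := fugacity_pos hd hs
  have hocc := mul_exp_neg_div_le_avgSize htf hdeg ht (mul_exp_eq_mul_log_one_add_fugacity hd s)
  set t := fugacity d s
  calc Fintype.card V / d * (1 + s)
      = Fintype.card V * t * exp (-s) / (1 + t) / t * ((1 + t) * ((1 + s) * exp s / d)) := by
        rw [exp_neg]
        field_simp
    _ ≤ _ := by gcongr

theorem mul_add_sq_le_log_indPoly_fugacity (htf : G.CliqueFree 3) {d : ℕ} (hd : 0 < d)
    (hdeg : ∀ v, G.degree v ≤ d) {w : ℝ} (hw : 0 ≤ w) :
    Fintype.card V / d * (w + w ^ 2 / 2) ≤ log (indPoly G (fugacity d w)) := by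
  set n : ℝ := (Fintype.card V : ℝ)
  let Φ s := log (indPoly G (fugacity d s)) - n / d * (s + s ^ 2 / 2)
  let Φ' s := avgSize G (fugacity d s) / fugacity d s * ((1 + fugacity d s) * ((1 + s) * exp s / d))
    - n / d * (1 + s)
  have hΦ' : ∀ s ∈ Set.Ioo 0 w, HasDerivAt Φ (Φ' s) s := fun s hs =>
    ((hasDerivAt_log_indPoly G (fugacity_pos hd hs.1)).comp s (hasDerivAt_fugacity d s)).sub
      ((((hasDerivAt_id' s).fun_add ((hasDerivAt_pow 2 s).div_const 2)).const_mul _).congr_deriv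
        (by norm_num))
  have hcont : ContinuousOn Φ (Set.Icc 0 w) := by
    refine ContinuousOn.sub (fun s hs => ContinuousAt.continuousWithinAt ?_) (by fun_prop)
    exact ((hasDerivAt_indPoly G _).continuousAt.comp (hasDerivAt_fugacity d s).continuousAt).log
      (indPoly_pos G (fugacity_nonneg d hs.1)).ne'
  have hmono : MonotoneOn Φ (Set.Icc 0 w) := by
    refine monotoneOn_of_hasDerivWithinAt_nonneg (f' := Φ') (convex_Icc 0 w) hcont ?_ ?_ <;>
      rw [interior_Icc]
    · exact fun s hs => (hΦ' s hs).hasDerivWithinAt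
    · exact fun s hs => sub_nonneg.2 (card_div_mul_le_deriv_log_indPoly_fugacity htf hd hdeg hs.1)
  have h := hmono (Set.left_mem_Icc.2 hw) (Set.right_mem_Icc.2 hw) hw
  simp only [Φ, fugacity_zero, indPoly_zero, log_one] at h
  linarith

end Integration

theorem stmt13_general {V : Type*} [Fintype V] (G : SimpleGraph V) (n d : ℕ)
    (hn : Fintype.card V = n) (hd : 1 ≤ d)
    (htf : G.CliqueFree 3) (hdeg : ∀ v, G.degree v ≤ d)
    (l w : ℝ) (hl : 0 < l) (hw : 0 < w)
    (hWe : w * Real.exp w = d * Real.log (1 + l)) :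
    Real.exp (((n : ℝ) / (2 * d)) * (w ^ 2 + 2 * w)) ≤ indPoly G l := by
  have hfug : fugacity d w = l := by
    rw [fugacity, hWe, mul_div_cancel_left₀ _ (by positivity), exp_log (by linarith)]
    ring
  have hlog := mul_add_sq_le_log_indPoly_fugacity htf hd hdeg hw.le
  rw [hfug, hn] at hlog
  calc exp ((n : ℝ) / (2 * d) * (w ^ 2 + 2 * w))
      = exp ((n : ℝ) / d * (w + w ^ 2 / 2)) := by ring_nf
    _ ≤ exp (log (indPoly G l)) := exp_le_exp.2 hlog
    _ = indPoly G l := exp_log (indPoly_pos G hl.le)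

theorem stmt13 {V : Type*} [Fintype V] (G : SimpleGraph V) (n d : ℕ)
    (hn : Fintype.card V = n) (hn1 : 1 ≤ n) (hd : 1 ≤ d)
    (htf : G.CliqueFree 3) (hdeg : ∀ v, G.degree v ≤ d)
    (l w : ℝ) (hl : 0 < l) (hw : 0 < w)
    (hWe : w * Real.exp w = d * Real.log (1 + l)) :
    Real.exp (((n : ℝ) / (2 * d)) * (w ^ 2 + 2 * w)) ≤ indPoly G l :=
  stmt13_general G n d hn hd htf hdeg l w hl hw hWe
end
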